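/- For every real x > 0 and every σ ∈ (0,1), the digamma function satisfies the strict-concavity inequality ψ(x + σ) < ψ(x) + σ · ψ'(x), where ψ' denotes the derivative of ψ. -/

import Mathlib

/-!
Log-convexity of `Γ` squeezes `ψ (x + n)` between `log (x + n - 1)` and `log (x + n)`; together
with `ψ (x + n) = ψ x + ∑ k < n, 1 / (x + k)` this gives Gauss's formula
`ψ x = lim (log n - ∑ k < n, 1 / (x + k))`, so `ψ` is concave on `(0, ∞)` as a limit of concave
functions. Then `ψ x = ψ (x + 1) - 1 / x` is strictly concave, and `ψ` is differentiable because
`Γ` is the restriction of a holomorphic function; the secant slope of a strictly concave function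
lies strictly below its derivative at the left endpoint.
-/

open Real Set Filter Topology

theorem ConcaveOn.of_tendsto {E ι : Type*} [AddCommGroup E] [Module ℝ E] {l : Filter ι} [l.NeBot]
    {s : Set E} {F : ι → E → ℝ} {f : E → ℝ} (hs : Convex ℝ s) (hF : ∀ i, ConcaveOn ℝ s (F i))
    (hlim : ∀ x ∈ s, Tendsto (fun i => F i x) l (𝓝 (f x))) : ConcaveOn ℝ s f :=
  ⟨hs, fun x hx y hy a b ha hb hab =>
    le_of_tendsto_of_tendsto' (((hlim x hx).const_smul a).add ((hlim y hy).const_smul b))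
      (hlim _ (hs hx hy ha hb hab)) fun i => (hF i).2 hx hy ha hb hab⟩

theorem convexOn_sum_inv_add_nat (n : ℕ) :
    ConvexOn ℝ (Ioi 0) fun x : ℝ => ∑ k ∈ Finset.range n, (x + k)⁻¹ := by
  induction n with
  | zero => simpa using convexOn_const (0 : ℝ) (convex_Ioi 0)
  | succ n ih =>
    simp only [Finset.sum_range_succ]
    refine ih.add ?_
    have h := ((convexOn_zpow (𝕜 := ℝ) (-1)).translate_left (n : ℝ)).subset (s := Ioi 0)
      (fun _ hy => add_pos_of_nonneg_of_pos n.cast_nonneg hy) (convex_Ioi 0)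
    simpa [Function.comp_def] using h

namespace Real

theorem contDiffAt_Gamma {x : ℝ} (hx : 0 < x) (n : WithTop ℕ∞) : ContDiffAt ℝ n Gamma x := by
  have hU : IsOpen {s : ℂ | 0 < s.re} := isOpen_lt continuous_const Complex.continuous_re
  have hdiff : DifferentiableOn ℂ Complex.Gamma {s : ℂ | 0 < s.re} := fun s hs =>
    (Complex.differentiableAt_Gamma s fun m h =>
      (m.cast_nonneg : (0 : ℝ) ≤ m).not_gt (by simpa [h] using hs)).differentiableWithinAt
  exact ((hdiff.contDiffOn (n := n) hU).contDiffAt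
    (hU.mem_nhds (by simpa using hx))).real_of_complex

theorem differentiableAt_log_Gamma {x : ℝ} (hx : 0 < x) :
    DifferentiableAt ℝ (fun t => log (Gamma t)) x :=
  ((contDiffAt_Gamma hx 1).differentiableAt one_ne_zero).log (Gamma_pos_of_pos hx).ne'

theorem log_Gamma_add_one {x : ℝ} (hx : 0 < x) :
    log (Gamma (x + 1)) = log (Gamma x) + log x := by
  rw [Gamma_add_one hx.ne', log_mul hx.ne' (Gamma_pos_of_pos hx).ne', add_comm]

noncomputable def digamma : ℝ → ℝ := deriv fun t => log (Gamma t)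

theorem differentiableAt_digamma {x : ℝ} (hx : 0 < x) : DifferentiableAt ℝ digamma x := by
  have h : ContDiffOn ℝ 2 (fun t => log (Gamma t)) (Ioi 0) := fun y hy =>
    ((contDiffAt_Gamma hy 2).log (Gamma_pos_of_pos hy).ne').contDiffWithinAt
  exact ((h.deriv_of_isOpen isOpen_Ioi (by norm_num)).differentiableOn
    one_ne_zero).differentiableAt (isOpen_Ioi.mem_nhds hx)

theorem digamma_add_one {x : ℝ} (hx : 0 < x) : digamma (x + 1) = digamma x + x⁻¹ := by
  rw [digamma, ← deriv_comp_add_const, ← deriv_log,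
    ← deriv_add (differentiableAt_log_Gamma hx) (differentiableAt_log hx.ne')]
  exact EventuallyEq.deriv_eq ((eventually_gt_nhds hx).mono fun t ht => log_Gamma_add_one ht)

theorem digamma_add_nat {x : ℝ} (hx : 0 < x) (n : ℕ) :
    digamma (x + n) = digamma x + ∑ k ∈ Finset.range n, (x + k)⁻¹ := by
  induction n with
  | zero => simp
  | succ n ih =>
    rw [Nat.cast_succ, ← add_assoc, digamma_add_one (by positivity), ih, Finset.sum_range_succ,
      add_assoc]

theorem digamma_le_log {x : ℝ} (hx : 0 < x) : digamma x ≤ log x := by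
  have h := convexOn_log_Gamma.deriv_le_slope hx (by positivity : (0 : ℝ) < x + 1)
    (lt_add_one x) (differentiableAt_log_Gamma hx)
  rw [slope_def_field, add_sub_cancel_left, div_one, Function.comp_def] at h
  beta_reduce at h
  rwa [log_Gamma_add_one hx, add_sub_cancel_left] at h

theorem log_le_digamma_add_one {x : ℝ} (hx : 0 < x) : log x ≤ digamma (x + 1) := by
  have h := convexOn_log_Gamma.slope_le_deriv hx (by positivity : (0 : ℝ) < x + 1)
    (lt_add_one x) (differentiableAt_log_Gamma (by positivity))
  rw [slope_def_field, add_sub_cancel_left, div_one, Function.comp_def] at h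
  beta_reduce at h
  rwa [log_Gamma_add_one hx, add_sub_cancel_left] at h

theorem tendsto_digamma_add_nat_sub_log {x : ℝ} (hx : 0 < x) :
    Tendsto (fun n : ℕ => digamma (x + n) - log n) atTop (𝓝 0) := by
  have hlog (c : ℝ) : Tendsto (fun n : ℕ => log (n + c) - log n) atTop (𝓝 0) :=
    (tendsto_log_comp_add_sub_log c).comp tendsto_natCast_atTop_atTop
  refine tendsto_of_tendsto_of_tendsto_of_le_of_le' (hlog (x - 1)) (hlog x) ?_ ?_ <;>
    filter_upwards [eventually_ge_atTop 1] with n hn <;>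
    have hn' : (1 : ℝ) ≤ n := by exact_mod_cast hn
  · have h := log_le_digamma_add_one (by linarith : 0 < x + n - 1)
    rw [sub_add_cancel] at h
    rw [← add_sub_assoc, add_comm (n : ℝ) x]
    linarith
  · rw [add_comm (n : ℝ) x]
    linarith [digamma_le_log (by positivity : 0 < x + n)]

theorem tendsto_log_sub_sum_inv {x : ℝ} (hx : 0 < x) :
    Tendsto (fun n : ℕ => log n - ∑ k ∈ Finset.range n, (x + k)⁻¹) atTop (𝓝 (digamma x)) := by
  have h := (tendsto_digamma_add_nat_sub_log hx).const_sub (digamma x)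
  rw [sub_zero] at h
  refine h.congr fun n => ?_
  rw [digamma_add_nat hx]
  ring

theorem concaveOn_digamma : ConcaveOn ℝ (Ioi 0) digamma :=
  ConcaveOn.of_tendsto (l := atTop) (convex_Ioi 0)
    (fun n => (convexOn_sum_inv_add_nat n).neg.add_const (log n) |>.congr fun y _ => by
      simp [sub_eq_neg_add])
    fun _ hx => tendsto_log_sub_sum_inv hx

theorem strictConcaveOn_digamma : StrictConcaveOn ℝ (Ioi 0) digamma := by
  have h := (concaveOn_digamma.translate_left 1).subset (s := Ioi 0)
    (fun _ hy => add_pos one_pos hy) (convex_Ioi 0)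
  have hinv := (strictConvexOn_zpow (m := -1) (by norm_num) (by norm_num)).neg
  refine (h.add_strictConcaveOn hinv).congr fun y hy => ?_
  simp [digamma_add_one hy]

end Real

open Real in
/-- Strict concavity inequality for the digamma function `ψ(x) = d/dx log Γ(x)`:
for `x > 0` and `σ ∈ (0,1)`, `ψ(x + σ) < ψ(x) + σ ψ'(x)`. -/
theorem digamma_strict_concavity (x σ : ℝ) (hx : 0 < x) (hσ : σ ∈ Set.Ioo (0 : ℝ) 1) :
    deriv (fun t : ℝ => Real.log (Real.Gamma t)) (x + σ) <
      deriv (fun t : ℝ => Real.log (Real.Gamma t)) x +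
        σ * deriv (deriv (fun t : ℝ => Real.log (Real.Gamma t))) x := by
  change digamma (x + σ) < digamma x + σ * deriv digamma x
  have h := strictConcaveOn_digamma.slope_lt_deriv hx (by linarith [hσ.1] : 0 < x + σ)
    (lt_add_of_pos_right x hσ.1) (differentiableAt_digamma hx)
  rw [slope_def_field, add_sub_cancel_left, div_lt_iff₀ hσ.1] at h
  linarith
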